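/- arXiv:1708.07336 — 4 statements merged into one kernel-verified Lean document; each statement's English description precedes it below -/
import Mathlib

section
/- Let x : Fin N⁺ → ℝⁿ be a family of positive instances and x' : Fin N⁻ → ℝⁿ a family of negative instances, let ⟪·,·⟫ and ‖·‖ denote the standard inner product and norm on ℝⁿ, let [z]₊ = max(z, 0), and let C ≥ 0. Then for every w ∈ ℝⁿ: (1/2)‖w‖² + C · Σ_{i} Σ_{j} [1 - ⟪w, x i - x' j⟫]₊ ≤ (1/4) · ( (1/2)‖2w‖² + 2·N⁻·C · Σ_{i} [1 - ⟪2w, x i⟫]₊ + 2·N⁺·C · Σ_{j} [1 + ⟪2w, x' j⟫]₊ ). -/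
/-!
Writing `a = 1 - ⟪2w, x⟫` and `b = 1 + ⟪2w, x'⟫`, the pairwise margin is the average of the two
point-wise margins: `1 - ⟪w, x - x'⟫ = (a + b) / 2`. Subadditivity of the hinge `[·]₊` bounds each
pairwise loss by `([a]₊ + [b]₊) / 2`; summing over all pairs counts every positive loss `N⁻` times
and every negative loss `N⁺` times, and `‖2w‖² = 4‖w‖²` matches the regularisers.
-/

open scoped RealInnerProductSpace

theorem Finset.sum_sum_add {ι κ M : Type*} [AddCommMonoid M] (s : Finset ι) (t : Finset κ)
    (f : ι → M) (g : κ → M) :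
    ∑ i ∈ s, ∑ j ∈ t, (f i + g j) = t.card • ∑ i ∈ s, f i + s.card • ∑ j ∈ t, g j := by
  simp only [Finset.sum_add_distrib, Finset.sum_const, Finset.smul_sum]

theorem two_mul_hinge_inner_sub_le {E : Type*} [NormedAddCommGroup E] [InnerProductSpace ℝ E]
    (w x y : E) :
    2 * max (1 - ⟪w, x - y⟫) 0 ≤ max (1 - ⟪(2 : ℝ) • w, x⟫) 0 + max (1 + ⟪(2 : ℝ) • w, y⟫) 0 :=
  calc 2 * max (1 - ⟪w, x - y⟫) 0
      = max ((1 - ⟪(2 : ℝ) • w, x⟫) + (1 + ⟪(2 : ℝ) • w, y⟫)) (0 + 0) := by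
        rw [mul_max_of_nonneg _ _ zero_le_two, inner_sub_right, real_inner_smul_left,
          real_inner_smul_left]
        ring_nf
    _ ≤ _ := max_add_add_le_max_add_max

/-- Theorem 1 of the paper: the RankSVM objective with pair weights `C/2`
(equivalently, weight `C` per positive pair) is upper-bounded by `1/4` times the
point-wise weighted SVM objective with `C₊ = 2N⁻·C`, `C₋ = 2N⁺·C`, evaluated at `2w`. -/
theorem ranksvm_obj_le_quarter_wsvm_obj {n Np Nm : ℕ}
    (x : Fin Np → EuclideanSpace ℝ (Fin n)) (x' : Fin Nm → EuclideanSpace ℝ (Fin n))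
    (C : ℝ) (hC : 0 ≤ C) (w : EuclideanSpace ℝ (Fin n)) :
    (1 / 2) * ‖w‖ ^ 2 +
        C * ∑ i, ∑ j, max (1 - ⟪w, x i - x' j⟫) 0 ≤
      (1 / 4) *
        ((1 / 2) * ‖(2 : ℝ) • w‖ ^ 2 +
          2 * (Nm : ℝ) * C * ∑ i, max (1 - ⟪(2 : ℝ) • w, x i⟫) 0 +
          2 * (Np : ℝ) * C * ∑ j, max (1 + ⟪(2 : ℝ) • w, x' j⟫) 0) := by
  have hnorm : ‖(2 : ℝ) • w‖ ^ 2 = 4 * ‖w‖ ^ 2 := by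
    rw [norm_smul, mul_pow, Real.norm_two]; norm_num
  have hpairs : 2 * ∑ i, ∑ j, max (1 - ⟪w, x i - x' j⟫) 0 ≤
      Nm * ∑ i, max (1 - ⟪(2 : ℝ) • w, x i⟫) 0 + Np * ∑ j, max (1 + ⟪(2 : ℝ) • w, x' j⟫) 0 :=
    calc 2 * ∑ i, ∑ j, max (1 - ⟪w, x i - x' j⟫) 0
        = ∑ i, ∑ j, 2 * max (1 - ⟪w, x i - x' j⟫) 0 := by simp only [Finset.mul_sum]
      _ ≤ ∑ i, ∑ j, (max (1 - ⟪(2 : ℝ) • w, x i⟫) 0 + max (1 + ⟪(2 : ℝ) • w, x' j⟫) 0) :=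
        Finset.sum_le_sum fun i _ ↦ Finset.sum_le_sum fun j _ ↦ two_mul_hinge_inner_sub_le w _ _
      _ = _ := by simp only [Finset.sum_sum_add, Finset.card_univ, Fintype.card_fin, nsmul_eq_mul]
  rw [hnorm]
  linarith [mul_le_mul_of_nonneg_left hpairs hC]
end

section
/- Let x : Fin N⁺ → ℝⁿ and x' : Fin N⁻ → ℝⁿ be families of positive and negative instances and let C ≥ 0. Define F(w) = (1/2)‖w‖² + C · Σ_{i} Σ_{j} max(1 - ⟪w, x i - x' j⟫, 0) and G(u) = (1/2)‖u‖² + 2·N⁻·C · Σ_{i} max(1 - ⟪u, x i⟫, 0) + 2·N⁺·C · Σ_{j} max(1 + ⟪u, x' j⟫, 0). Then the infimum over w ∈ ℝⁿ of F(w) is at most (1/4) times the infimum over u ∈ ℝⁿ of G(u). -/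
/-!
Halving the weight vector turns the pair margin `⟪u/2, x i - x' j⟫` into the average of the two
point margins `⟪u, x i⟫` and `-⟪u, x' j⟫`, so by convexity of the hinge each pair loss of RankSVM
at `u / 2` is at most the average of the two point losses of the weighted SVM at `u`. Summing over
all pairs counts every positive loss `N⁻` times and every negative loss `N⁺` times, whence
`F (u / 2) ≤ G u / 4` for every `u`; taking infima gives the claim.
-/

open scoped RealInnerProductSpace

section

variable {ι κ E : Type*} [Fintype ι] [Fintype κ]
  [NormedAddCommGroup E] [InnerProductSpace ℝ E]

noncomputable def rankSvmObjective (x : ι → E) (x' : κ → E) (C : ℝ) (w : E) : ℝ :=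
  (1 / 2) * ‖w‖ ^ 2 + C * ∑ i, ∑ j, max (1 - ⟪w, x i - x' j⟫) 0

noncomputable def weightedSvmObjective (x : ι → E) (x' : κ → E) (C : ℝ) (u : E) : ℝ :=
  (1 / 2) * ‖u‖ ^ 2 +
    2 * (Fintype.card κ : ℝ) * C * ∑ i, max (1 - ⟪u, x i⟫) 0 +
    2 * (Fintype.card ι : ℝ) * C * ∑ j, max (1 + ⟪u, x' j⟫) 0

theorem hinge_half_sub_le (a b : ℝ) :
    max (1 - (a - b) / 2) 0 ≤ (max (1 - a) 0 + max (1 + b) 0) / 2 := by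
  have ha := le_max_left (1 - a) 0
  have hb := le_max_left (1 + b) 0
  have ha₀ := le_max_right (1 - a) 0
  have hb₀ := le_max_right (1 + b) 0
  exact max_le (by linarith) (by linarith)

theorem sum_pair_hinge_half_le (x : ι → E) (x' : κ → E) (u : E) :
    ∑ i, ∑ j, max (1 - ⟪(2 : ℝ)⁻¹ • u, x i - x' j⟫) 0 ≤
      Fintype.card κ / 2 * ∑ i, max (1 - ⟪u, x i⟫) 0 +
        Fintype.card ι / 2 * ∑ j, max (1 + ⟪u, x' j⟫) 0 :=
  calc ∑ i, ∑ j, max (1 - ⟪(2 : ℝ)⁻¹ • u, x i - x' j⟫) 0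
      ≤ ∑ i, ∑ j, (max (1 - ⟪u, x i⟫) 0 + max (1 + ⟪u, x' j⟫) 0) / 2 := by
        gcongr with i _ j _
        rw [real_inner_smul_left, inner_sub_right, inv_mul_eq_div]
        exact hinge_half_sub_le _ _
    _ = Fintype.card κ / 2 * ∑ i, max (1 - ⟪u, x i⟫) 0 +
          Fintype.card ι / 2 * ∑ j, max (1 + ⟪u, x' j⟫) 0 := by
        simp only [add_div, Finset.sum_add_distrib, Finset.sum_const, Finset.card_univ,
          nsmul_eq_mul, ← Finset.sum_div, ← Finset.mul_sum]
        ring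

theorem rankSvmObjective_nonneg (x : ι → E) (x' : κ → E) {C : ℝ} (hC : 0 ≤ C) (w : E) :
    0 ≤ rankSvmObjective x x' C w := by
  have : 0 ≤ ∑ i, ∑ j, max (1 - ⟪w, x i - x' j⟫) 0 :=
    Finset.sum_nonneg fun i _ => Finset.sum_nonneg fun j _ => le_max_right _ _
  unfold rankSvmObjective
  positivity

theorem rankSvmObjective_half_le (x : ι → E) (x' : κ → E) {C : ℝ} (hC : 0 ≤ C) (u : E) :
    rankSvmObjective x x' C ((2 : ℝ)⁻¹ • u) ≤ (1 / 4) * weightedSvmObjective x x' C u := by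
  have hnorm : ‖(2 : ℝ)⁻¹ • u‖ ^ 2 = (1 / 4) * ‖u‖ ^ 2 := by
    rw [norm_smul, mul_pow]
    norm_num
  have hsum := mul_le_mul_of_nonneg_left (sum_pair_hinge_half_le x x' u) hC
  unfold rankSvmObjective weightedSvmObjective
  rw [hnorm]
  linarith

theorem iInf_rankSvmObjective_le (x : ι → E) (x' : κ → E) {C : ℝ} (hC : 0 ≤ C) :
    ⨅ w, rankSvmObjective x x' C w ≤ (1 / 4) * ⨅ u, weightedSvmObjective x x' C u := by
  have hbdd : BddBelow (Set.range (rankSvmObjective x x' C)) :=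
    ⟨0, Set.forall_mem_range.2 (rankSvmObjective_nonneg x x' hC)⟩
  rw [Real.mul_iInf_of_nonneg (by norm_num)]
  exact le_ciInf fun u => (ciInf_le hbdd _).trans (rankSvmObjective_half_le x x' hC u)

end

/-- The optimization-level consequence of Theorem 1 of the paper: the infimum of the
RankSVM objective `F` is at most `1/4` times the infimum of the point-wise weighted
SVM objective `G`. -/
theorem iInf_ranksvm_le_quarter_iInf_wsvm {n Np Nm : ℕ}
    (x : Fin Np → EuclideanSpace ℝ (Fin n)) (x' : Fin Nm → EuclideanSpace ℝ (Fin n))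
    (C : ℝ) (hC : 0 ≤ C)
    (F G : EuclideanSpace ℝ (Fin n) → ℝ)
    (hF : ∀ w, F w = (1 / 2) * ‖w‖ ^ 2 +
        C * ∑ i, ∑ j, max (1 - ⟪w, x i - x' j⟫) 0)
    (hG : ∀ u, G u = (1 / 2) * ‖u‖ ^ 2 +
        2 * (Nm : ℝ) * C * ∑ i, max (1 - ⟪u, x i⟫) 0 +
        2 * (Np : ℝ) * C * ∑ j, max (1 + ⟪u, x' j⟫) 0) :
    (⨅ w, F w) ≤ (1 / 4) * ⨅ u, G u := by
  have hF' : F = rankSvmObjective x x' C := funext hF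
  have hG' : G = weightedSvmObjective x x' C := by
    funext u
    simp only [hG, weightedSvmObjective, Fintype.card_fin]
  rw [hF', hG']
  exact iInf_rankSvmObjective_le x x' hC
end

section
/- Let x : Fin N⁺ → ℝⁿ and x' : Fin N⁻ → ℝⁿ be families of positive and negative instances and let C ≥ 0. Define F(w) = (1/2)‖w‖² + C · Σ_{i} Σ_{j} max(1 - ⟪w, x i - x' j⟫, 0) and H(τ, u) = (1/2)‖u‖² + 2·N⁻·C · Σ_{i} max(1 - ⟪u, x i⟫ + τ, 0) + 2·N⁺·C · Σ_{j} max(1 + ⟪u, x' j⟫ - τ, 0) for τ ∈ ℝ, u ∈ ℝⁿ. Then the infimum over w ∈ ℝⁿ of F(w) is at most (1/4) times the infimum over (τ, u) ∈ ℝ × ℝⁿ of H(τ, u). -/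
/-!
Halving the weight vector of the thresholded SVM gives a RankSVM candidate: since the hinge
`t ↦ max t 0` is convex, the pairwise hinge at `(u / 2, x i - x' j)` is at most the average of the
pointwise hinges at `(τ, u, x i)` and `(τ, u, x' j)`, the threshold `τ` cancelling between them.
Summing over all pairs counts each positive point `Nm` times and each negative point `Np` times,
which is exactly what the weights `2 Nm C` and `2 Np C` compensate for.
-/

open scoped RealInnerProductSpace

section SVMObjectives

variable {E ι κ : Type*} [NormedAddCommGroup E] [InnerProductSpace ℝ E] [Fintype ι] [Fintype κ]

theorem max_midpoint_zero_le (a b : ℝ) : max ((a + b) / 2) 0 ≤ (max a 0 + max b 0) / 2 :=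
  max_le (by linarith [le_max_left a 0, le_max_left b 0])
    (by linarith [le_max_right a 0, le_max_right b 0])

theorem sum_sum_add_eq (f : ι → ℝ) (g : κ → ℝ) :
    ∑ i, ∑ j, (f i + g j) = Fintype.card κ * ∑ i, f i + Fintype.card ι * ∑ j, g j := by
  simp only [Finset.sum_add_distrib, Finset.sum_const, Finset.card_univ, nsmul_eq_mul,
    Finset.mul_sum]

noncomputable def rankSVMObjective (C : ℝ) (x : ι → E) (x' : κ → E) (w : E) : ℝ :=
  (1 / 2) * ‖w‖ ^ 2 + C * ∑ i, ∑ j, max (1 - ⟪w, x i - x' j⟫) 0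

noncomputable def thresholdSVMObjective (C : ℝ) (x : ι → E) (x' : κ → E) (τ : ℝ) (u : E) : ℝ :=
  (1 / 2) * ‖u‖ ^ 2 + 2 * Fintype.card κ * C * ∑ i, max (1 - ⟪u, x i⟫ + τ) 0 +
    2 * Fintype.card ι * C * ∑ j, max (1 + ⟪u, x' j⟫ - τ) 0

variable {C : ℝ} {x : ι → E} {x' : κ → E}

theorem rankSVMObjective_nonneg (hC : 0 ≤ C) (w : E) : 0 ≤ rankSVMObjective C x x' w := by
  unfold rankSVMObjective
  have : 0 ≤ ∑ i, ∑ j, max (1 - ⟪w, x i - x' j⟫) 0 :=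
    Finset.sum_nonneg fun i _ => Finset.sum_nonneg fun j _ => le_max_right _ _
  positivity

theorem rankSVMObjective_half_smul_le (hC : 0 ≤ C) (τ : ℝ) (u : E) :
    rankSVMObjective C x x' ((1 / 2 : ℝ) • u) ≤ (1 / 4) * thresholdSVMObjective C x x' τ u := by
  set A : ι → ℝ := fun i => max (1 - ⟪u, x i⟫ + τ) 0
  set B : κ → ℝ := fun j => max (1 + ⟪u, x' j⟫ - τ) 0
  have hpair : ∀ i j, max (1 - ⟪(1 / 2 : ℝ) • u, x i - x' j⟫) 0 ≤ (A i + B j) / 2 := by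
    intro i j
    convert max_midpoint_zero_le (1 - ⟪u, x i⟫ + τ) (1 + ⟪u, x' j⟫ - τ) using 2
    rw [real_inner_smul_left, inner_sub_right]
    ring
  have hsum : ∑ i, ∑ j, max (1 - ⟪(1 / 2 : ℝ) • u, x i - x' j⟫) 0 ≤
      (Fintype.card κ * ∑ i, A i + Fintype.card ι * ∑ j, B j) / 2 := by
    calc _ ≤ ∑ i, ∑ j, (A i + B j) / 2 :=
          Finset.sum_le_sum fun i _ => Finset.sum_le_sum fun j _ => hpair i j
      _ = _ := by simp only [← Finset.sum_div, sum_sum_add_eq]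
  have hnorm : ‖(1 / 2 : ℝ) • u‖ ^ 2 = (1 / 4) * ‖u‖ ^ 2 := by
    rw [norm_smul, Real.norm_eq_abs, abs_of_pos one_half_pos]
    ring
  unfold rankSVMObjective thresholdSVMObjective
  rw [hnorm]
  linear_combination mul_le_mul_of_nonneg_left hsum hC

end SVMObjectives

/-- The optimization-level consequence of Theorem 2 of the paper: the infimum of the
RankSVM objective `F` is at most `1/4` times the infimum over `(τ, u)` of the standard
(thresholded) SVM objective `H`. -/
theorem iInf_ranksvm_le_quarter_iInf_standard_svm {n Np Nm : ℕ}
    (x : Fin Np → EuclideanSpace ℝ (Fin n)) (x' : Fin Nm → EuclideanSpace ℝ (Fin n))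
    (C : ℝ) (hC : 0 ≤ C)
    (F : EuclideanSpace ℝ (Fin n) → ℝ)
    (H : ℝ → EuclideanSpace ℝ (Fin n) → ℝ)
    (hF : ∀ w, F w = (1 / 2) * ‖w‖ ^ 2 +
        C * ∑ i, ∑ j, max (1 - ⟪w, x i - x' j⟫) 0)
    (hH : ∀ τ u, H τ u = (1 / 2) * ‖u‖ ^ 2 +
        2 * (Nm : ℝ) * C * ∑ i, max (1 - ⟪u, x i⟫ + τ) 0 +
        2 * (Np : ℝ) * C * ∑ j, max (1 + ⟪u, x' j⟫ - τ) 0) :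
    (⨅ w, F w) ≤ (1 / 4) * ⨅ p : ℝ × EuclideanSpace ℝ (Fin n), H p.1 p.2 := by
  obtain rfl : F = rankSVMObjective C x x' := funext hF
  obtain rfl : H = thresholdSVMObjective C x x' := by
    funext τ u
    simp only [hH, thresholdSVMObjective, Fintype.card_fin]
  have hbdd : BddBelow (Set.range (rankSVMObjective C x x')) :=
    ⟨0, by rintro _ ⟨w, rfl⟩; exact rankSVMObjective_nonneg hC w⟩
  rw [Real.mul_iInf_of_nonneg (by norm_num)]
  exact le_ciInf fun ⟨τ, u⟩ =>
    (ciInf_le hbdd _).trans (rankSVMObjective_half_smul_le hC τ u)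
end

section
/- Let x : Fin N⁺ → ℝⁿ be a family of positive instances and x' : Fin N⁻ → ℝⁿ a family of negative instances, and let w ∈ ℝⁿ. Then the number of mis-ordered pairs satisfies Σ_{i} Σ_{j} 𝟙(⟪w, x i - x' j⟫ ≤ 0) ≤ (N⁻/2) · Σ_{i} max(1 - 2⟪w, x i⟫, 0) + (N⁺/2) · Σ_{j} max(1 + 2⟪w, x' j⟫, 0), where 𝟙(P) equals 1 if the condition P holds and 0 otherwise. -/
open scoped RealInnerProductSpace

open Finset

lemma ite_nonpos_le_max_one_sub (z : ℝ) : (if z ≤ 0 then (1 : ℝ) else 0) ≤ max (1 - z) 0 := by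
  split_ifs with hz
  · exact le_max_of_le_left (by linarith)
  · exact le_max_right _ _

-- `1 - (a - b)` is the average of `1 - 2a` and `1 + 2b`, and `max · 0` is convex.
lemma max_one_sub_sub_le (a b : ℝ) :
    max (1 - (a - b)) 0 ≤ (max (1 - 2 * a) 0 + max (1 + 2 * b) 0) / 2 := by
  have ha := le_max_left (1 - 2 * a) 0
  have hb := le_max_left (1 + 2 * b) 0
  have ha₀ := le_max_right (1 - 2 * a) 0
  have hb₀ := le_max_right (1 + 2 * b) 0
  exact max_le (by linarith) (by linarith)

lemma ite_inner_sub_nonpos_le {E : Type*} [NormedAddCommGroup E] [InnerProductSpace ℝ E]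
    (w u v : E) :
    (if ⟪w, u - v⟫ ≤ 0 then (1 : ℝ) else 0) ≤
      (max (1 - 2 * ⟪w, u⟫) 0 + max (1 + 2 * ⟪w, v⟫) 0) / 2 := by
  calc (if ⟪w, u - v⟫ ≤ 0 then (1 : ℝ) else 0)
      ≤ max (1 - ⟪w, u - v⟫) 0 := ite_nonpos_le_max_one_sub _
    _ ≤ _ := by rw [inner_sub_right]; exact max_one_sub_sub_le _ _

lemma sum_sum_add_div_two {ι κ : Type*} [Fintype ι] [Fintype κ] (f : ι → ℝ) (g : κ → ℝ) :
    ∑ i, ∑ j, (f i + g j) / 2 =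
      (Fintype.card κ / 2 : ℝ) * ∑ i, f i + (Fintype.card ι / 2 : ℝ) * ∑ j, g j := by
  simp only [← sum_div, sum_add_distrib, sum_const, card_univ, nsmul_eq_mul, ← mul_sum]
  ring

/-- The number of mis-ordered pairs of a linear ranker `w` is upper-bounded by the
balanced point-wise hinge losses: `Σᵢ Σⱼ 𝟙(⟪w, x i - x' j⟫ ≤ 0) ≤
(N⁻/2) Σᵢ [1 - 2⟪w, x i⟫]₊ + (N⁺/2) Σⱼ [1 + 2⟪w, x' j⟫]₊`. -/
theorem misordered_pairs_le_balanced_pointwise_hinge {n Np Nm : ℕ}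
    (x : Fin Np → EuclideanSpace ℝ (Fin n)) (x' : Fin Nm → EuclideanSpace ℝ (Fin n))
    (w : EuclideanSpace ℝ (Fin n)) :
    (∑ i, ∑ j, if ⟪w, x i - x' j⟫ ≤ 0 then (1 : ℝ) else 0) ≤
      ((Nm : ℝ) / 2) * ∑ i, max (1 - 2 * ⟪w, x i⟫) 0 +
        ((Np : ℝ) / 2) * ∑ j, max (1 + 2 * ⟪w, x' j⟫) 0 := by
  calc (∑ i, ∑ j, if ⟪w, x i - x' j⟫ ≤ 0 then (1 : ℝ) else 0)
      ≤ ∑ i, ∑ j, (max (1 - 2 * ⟪w, x i⟫) 0 + max (1 + 2 * ⟪w, x' j⟫) 0) / 2 :=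
        sum_le_sum fun i _ ↦ sum_le_sum fun j _ ↦ ite_inner_sub_nonpos_le w (x i) (x' j)
    _ = _ := by rw [sum_sum_add_div_two, Fintype.card_fin, Fintype.card_fin]
end
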